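/- arXiv:2104.00286 — 2 statements merged into one kernel-verified Lean document; each statement's English description precedes it below -/
import Mathlib

section
/- For the function h(x) = tanh(x)/x (with h(0)=1), the inequality -h'(x) ≤ h(x)^2 holds for all x ≥ 0; equivalently, x*tanh'(x) - tanh(x) ≥ -tanh(x)^2 suitably rearranged gives -(d/dx)(tanh x / x) ≤ (tanh x / x)^2 for x > 0. -/
/-!
Since `tanh' = 1 - tanh²`, the claim multiplied by `x²` reads
`tanh x - x (1 - tanh² x) ≤ tanh² x`, i.e. `(1 - tanh x) (tanh x - x (1 + tanh x)) ≤ 0`.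
This follows from `0 ≤ tanh x ≤ x` and `tanh x < 1`, where `tanh x ≤ x` holds because
`x - tanh x` has the nonnegative derivative `tanh² x` and vanishes at `0`.
-/

namespace Real

theorem hasDerivAt_tanh (x : ℝ) : HasDerivAt tanh (1 - tanh x ^ 2) x := by
  have hcosh : cosh x ≠ 0 := (cosh_pos x).ne'
  rw [show tanh = sinh / cosh from funext tanh_eq_sinh_div_cosh]
  refine ((hasDerivAt_sinh x).div (hasDerivAt_cosh x) hcosh).congr_deriv ?_
  simp only [Pi.div_apply]
  field_simp

theorem tanh_nonneg {x : ℝ} (hx : 0 ≤ x) : 0 ≤ tanh x := by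
  rw [tanh_eq_sinh_div_cosh]
  exact div_nonneg (sinh_nonneg_iff.mpr hx) (cosh_pos x).le

theorem tanh_le_self {x : ℝ} (hx : 0 ≤ x) : tanh x ≤ x := by
  have hmono : Monotone fun y => y - tanh y :=
    monotone_of_hasDerivAt_nonneg (fun y => ((hasDerivAt_id y).sub (hasDerivAt_tanh y)))
      fun y => by simp only [sub_sub_cancel]; positivity
  simpa only [tanh_zero, sub_zero, sub_nonneg] using hmono hx

theorem hasDerivAt_tanh_div_self {x : ℝ} (hx : x ≠ 0) :
    HasDerivAt (fun y => tanh y / y) ((x * (1 - tanh x ^ 2) - tanh x) / x ^ 2) x :=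
  ((hasDerivAt_tanh x).div (hasDerivAt_id' x) hx).congr_deriv (by ring)

theorem tanh_sub_mul_one_sub_tanh_sq_le {x : ℝ} (hx : 0 ≤ x) :
    tanh x - x * (1 - tanh x ^ 2) ≤ tanh x ^ 2 := by
  have hfactor : 0 ≤ (1 - tanh x) * (x * (1 + tanh x) - tanh x) :=
    mul_nonneg (by linarith [tanh_lt_one x])
      (by linarith [tanh_le_self hx, mul_nonneg hx (tanh_nonneg hx)])
  linear_combination hfactor

end Real

/-- For h(x) = tanh(x)/x, we have -h'(x) ≤ h(x)² for all x > 0. -/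
theorem neg_deriv_tanh_div_le_sq :
    ∀ x : ℝ, 0 < x →
      -(deriv (fun y : ℝ => Real.tanh y / y) x) ≤ (Real.tanh x / x) ^ 2 := by
  intro x hx
  rw [(Real.hasDerivAt_tanh_div_self hx.ne').deriv, ← neg_div, div_pow,
    div_le_div_iff_of_pos_right (by positivity)]
  linarith [Real.tanh_sub_mul_one_sub_tanh_sq_le hx.le]
end

section
/- For every μ ∈ (0,1) and every positive integer k, define F_μ(k) = 1/(1+k^2) - 1/(1 + k·tanh(√μ·k)/√μ). Then |F_μ(k)| ≤ √μ / k. -/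
lemma sinh_le_mul_cosh {x : ℝ} (hx : 0 ≤ x) : Real.sinh x ≤ x * Real.cosh x := by
  have hmono : MonotoneOn (fun y : ℝ => y * Real.cosh y - Real.sinh y) (Set.Ici 0) := by
    have hd : ∀ y : ℝ, HasDerivAt (fun y : ℝ => y * Real.cosh y - Real.sinh y)
        (1 * Real.cosh y + y * Real.sinh y - Real.cosh y) y := fun y =>
      ((hasDerivAt_id y).mul (Real.hasDerivAt_cosh y)).sub (Real.hasDerivAt_sinh y)
    apply monotoneOn_of_deriv_nonneg (convex_Ici 0)
    · exact (((continuous_id.mul Real.continuous_cosh).sub Real.continuous_sinh)).continuousOn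
    · intro y _
      exact ((hd y).differentiableAt).differentiableWithinAt
    · intro y hy
      rw [(hd y).deriv]
      have hy0 : 0 < y := by simpa using hy
      nlinarith [Real.sinh_pos_iff.2 hy0]
  have := hmono (Set.self_mem_Ici) (Set.mem_Ici.2 hx) hx
  simpa using this

lemma tanh_le_self {x : ℝ} (hx : 0 ≤ x) : Real.tanh x ≤ x := by
  rw [Real.tanh_eq_sinh_div_cosh, div_le_iff₀ (Real.cosh_pos x)]
  exact sinh_le_mul_cosh hx

lemma sub_tanh_le {x : ℝ} (hx : 0 ≤ x) : x - Real.tanh x ≤ x * Real.tanh x := by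
  rw [Real.tanh_eq_sinh_div_cosh]
  have hc := Real.cosh_pos x
  have key : x * Real.cosh x - Real.sinh x ≤ x * Real.sinh x := by
    rw [Real.sinh_eq, Real.cosh_eq]
    have he := Real.add_one_le_exp (2 * x)
    have h1 : Real.exp x * Real.exp (-x) = 1 := by rw [← Real.exp_add]; simp
    have h2 : Real.exp (2 * x) = Real.exp x * Real.exp x := by rw [← Real.exp_add]; ring_nf
    have hp := Real.exp_pos x
    have hn := Real.exp_pos (-x)
    rw [h2] at he
    nlinarith [mul_le_mul_of_nonneg_right he hn.le]
  calc x - Real.sinh x / Real.cosh x = (x * Real.cosh x - Real.sinh x) / Real.cosh x := by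
        field_simp
    _ ≤ (x * Real.sinh x) / Real.cosh x := by
        exact div_le_div_of_nonneg_right key hc.le |>.trans_eq rfl
    _ = x * (Real.sinh x / Real.cosh x) := by ring

/-- For μ ∈ (0,1) and k ≥ 1,
|1/(1+k²) - 1/(1 + k·tanh(√μ k)/√μ)| ≤ √μ/k. -/
theorem abs_F_mu_le (μ : ℝ) (hμ0 : 0 < μ) (hμ1 : μ < 1) (k : ℕ) (hk : 1 ≤ k) :
    |1 / (1 + (k : ℝ) ^ 2)
      - 1 / (1 + (k : ℝ) * Real.tanh (Real.sqrt μ * k) / Real.sqrt μ)|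
      ≤ Real.sqrt μ / k := by
  set s : ℝ := Real.sqrt μ with hs_def
  have hs : 0 < s := Real.sqrt_pos.2 hμ0
  have hk1 : (1 : ℝ) ≤ (k : ℝ) := by exact_mod_cast hk
  have hk0 : (0 : ℝ) < (k : ℝ) := lt_of_lt_of_le one_pos hk1
  set x : ℝ := s * (k : ℝ) with hx_def
  have hx : 0 < x := mul_pos hs hk0
  set T : ℝ := Real.tanh x with hT_def
  have hT0 : 0 < T := by
    rw [hT_def, Real.tanh_eq_sinh_div_cosh]
    exact div_pos (Real.sinh_pos_iff.2 hx) (Real.cosh_pos x)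
  have hTx : T ≤ x := tanh_le_self hx.le
  have hkey : x - T ≤ x * T := sub_tanh_le hx.le
  have hA : (0 : ℝ) < 1 + (k : ℝ) ^ 2 := by positivity
  have hD : (0 : ℝ) < 1 + (k : ℝ) * T / s := by positivity
  have hDA : 1 + (k : ℝ) * T / s ≤ 1 + (k : ℝ) ^ 2 := by
    have : (k : ℝ) * T / s ≤ (k : ℝ) ^ 2 := by
      rw [div_le_iff₀ hs]
      calc (k : ℝ) * T ≤ (k : ℝ) * x := by nlinarith
        _ = (k : ℝ) ^ 2 * s := by rw [hx_def]; ring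
    linarith
  have hneg : 1 / (1 + (k : ℝ) ^ 2) - 1 / (1 + (k : ℝ) * T / s) ≤ 0 := by
    have := one_div_le_one_div_of_le hD hDA
    linarith
  rw [abs_of_nonpos hneg, neg_sub]
  rw [div_sub_div _ _ hD.ne' hA.ne', div_le_div_iff₀ (mul_pos hD hA) hk0]
  have hTs : (k : ℝ) * T / s * s = (k : ℝ) * T := div_mul_cancel₀ _ hs.ne'
  have hxk : x * (k : ℝ) = s * (k : ℝ) ^ 2 := by rw [hx_def]; ring
  have h3 : (x - T) * (k : ℝ) ^ 2 ≤ (x * T) * (k : ℝ) ^ 2 :=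
    mul_le_mul_of_nonneg_right hkey (by positivity)
  set g : ℝ := (k : ℝ) * T / s with hg_def
  have hgs : g * s = (k : ℝ) * T := div_mul_cancel₀ _ hs.ne'
  have hg0 : 0 < g := by rw [hg_def]; positivity
  have hgs2 : g * s * (k : ℝ) = (k : ℝ) * T * (k : ℝ) := by rw [hgs]
  have hgs4 : g * s * s = (k : ℝ) * T * s := by rw [hgs]
  have hgs5 : g * s * (s * (k : ℝ) ^ 2) = (k : ℝ) * T * (s * (k : ℝ) ^ 2) := by rw [hgs]
  have hmul : ((1 * (1 + (k : ℝ) ^ 2) - (1 + g) * 1) * (k : ℝ)) * s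
      ≤ (s * ((1 + g) * (1 + (k : ℝ) ^ 2))) * s := by
    have hx3 : (s * (k : ℝ) - T) * (k : ℝ) ^ 2 ≤ (s * (k : ℝ) * T) * (k : ℝ) ^ 2 := by
      have : x = s * (k : ℝ) := hx_def
      nlinarith [h3]
    nlinarith [hx3, hgs2, hgs4, hgs5, sq_nonneg s, mul_nonneg (mul_nonneg hs.le hk0.le) hT0.le,
      mul_nonneg (mul_nonneg hs.le hs.le) (sq_nonneg (k : ℝ))]
  exact le_of_mul_le_mul_right hmul hs
end
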